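/- Let K ≥ 1 and let f = h + conj∘g be a sense-preserving, K-quasiconformal harmonic mapping on 𝔻. Let λ ∈ (0,1), r₁ ∈ [0,1) and ζ ∈ ℂ with |ζ| = 1, and suppose Re(ζ·h''(ηζ)/h'(ηζ)) < (2η − 2λ)/(1 − η²) for all η ∈ [r₁, 1). Then for all r, ρ with r₁ ≤ r ≤ ρ < 1, |h'(ρζ)| + |g'(ρζ)| ≤ (2K/(1+K))·(|h'(rζ)| + |g'(rζ)|)·((1−ρ)/(1−r))^{λ−1}. -/

import Mathlib

/-!
Along the radius `t ↦ tζ`, the function `log |h'(tζ)| + (1 - λ) log (1 - t) + (1 + λ) log (1 + t)`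
has derivative `Re (ζ h''(tζ) / h'(tζ)) - (2t - 2λ) / (1 - t²) < 0`, so it decreases on `[r₁, 1)`.
Comparing its values at `r ≤ ρ` and discarding the factor `((1 + r) / (1 + ρ))^(1 + λ) ≤ 1` bounds
`|h'(ρζ)|` by `|h'(rζ)| ((1 - ρ) / (1 - r))^(λ - 1)`; quasiconformality at `ρζ` gives
`|h'| + |g'| ≤ 2K/(1 + K) |h'|`.
-/

open Metric Set

lemma one_le_of_add_le_mul_sub {a b K : ℝ} (hb : 0 ≤ b) (hba : b < a)
    (hK : a + b ≤ K * (a - b)) : 1 ≤ K := by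
  nlinarith

lemma add_le_two_mul_div_one_add_mul {a b K : ℝ} (hb : 0 ≤ b) (hba : b < a)
    (hK : a + b ≤ K * (a - b)) : a + b ≤ 2 * K / (1 + K) * a := by
  have hK0 : 0 < 1 + K := by linarith [one_le_of_add_le_mul_sub hb hba hK]
  rw [div_mul_eq_mul_div, le_div_iff₀ hK0]
  nlinarith

lemma HasDerivAt.log_norm {A : ℝ → ℂ} {A' : ℂ} {t : ℝ} (hA : HasDerivAt A A' t)
    (h0 : A t ≠ 0) : HasDerivAt (fun s ↦ Real.log ‖A s‖) (A' / A t).re t := by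
  have hsq : (fun s ↦ Real.log ‖A s‖) = fun s ↦ Real.log (‖A s‖ ^ 2) / 2 := by
    ext s; rw [Real.log_pow]; ring
  rw [hsq]
  refine ((hA.norm_sq.log (by positivity)).div_const 2).congr_deriv ?_
  rw [Complex.inner, Complex.div_re, ← Complex.normSq_eq_norm_sq]
  have : Complex.normSq (A t) ≠ 0 := Complex.normSq_pos.mpr h0 |>.ne'
  field_simp
  simp [Complex.mul_re]

lemma HasDerivAt.comp_ofReal_mul {f : ℂ → ℂ} {f' ζ : ℂ} {t : ℝ} (hf : HasDerivAt f f' (t * ζ)) :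
    HasDerivAt (fun s : ℝ ↦ f (s * ζ)) (ζ * f') t := by
  simpa [mul_comm] using (hf.comp (t : ℂ) ((hasDerivAt_id _).mul_const ζ)).comp_ofReal

noncomputable def logWeight (lam t : ℝ) : ℝ :=
  (1 - lam) * Real.log (1 - t) + (1 + lam) * Real.log (1 + t)

lemma hasDerivAt_logWeight (lam : ℝ) {t : ℝ} (ht : t ∈ Ioo (-1) 1) :
    HasDerivAt (logWeight lam) (-((2 * t - 2 * lam) / (1 - t ^ 2))) t := by
  obtain ⟨ht₀, ht₁⟩ := ht
  have h₁ : HasDerivAt (fun s ↦ Real.log (1 - s)) (-1 / (1 - t)) t :=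
    ((hasDerivAt_id t).const_sub 1).log (sub_pos.mpr ht₁).ne'
  have h₂ : HasDerivAt (fun s ↦ Real.log (1 + s)) (1 / (1 + t)) t :=
    ((hasDerivAt_id t).const_add 1).log (by linarith : 0 < 1 + t).ne'
  refine ((h₁.const_mul (1 - lam)).add (h₂.const_mul (1 + lam))).congr_deriv ?_
  have : 1 - t ≠ 0 := by linarith
  have : 1 + t ≠ 0 := by linarith
  have : 1 - t ^ 2 ≠ 0 := by nlinarith
  field_simp
  ring

lemma le_mul_rpow_of_log_add_logWeight_le {a b lam r ρ : ℝ} (ha : 0 < a) (hb : 0 < b)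
    (hlam : -1 ≤ lam) (hr : -1 < r) (hrρ : r ≤ ρ) (hρ : ρ < 1)
    (h : Real.log b + logWeight lam ρ ≤ Real.log a + logWeight lam r) :
    b ≤ a * ((1 - ρ) / (1 - r)) ^ (lam - 1) := by
  have hρr : 0 < (1 - ρ) / (1 - r) := div_pos (by linarith) (by linarith)
  rw [← Real.log_le_log_iff hb (by positivity), Real.log_mul ha.ne' (by positivity),
    Real.log_rpow hρr, Real.log_div (by linarith) (by linarith)]
  have hmono : (1 + lam) * Real.log (1 + r) ≤ (1 + lam) * Real.log (1 + ρ) :=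
    mul_le_mul_of_nonneg_left (Real.log_le_log (by linarith) (by linarith)) (by linarith)
  unfold logWeight at h
  linarith

lemma norm_le_mul_rpow_of_re_div_lt {A A' : ℝ → ℂ} {lam r₁ : ℝ} (hlam : -1 ≤ lam) (hr₁ : -1 < r₁)
    (hA : ∀ t ∈ Ico r₁ 1, HasDerivAt A (A' t) t) (hA₀ : ∀ t ∈ Ico r₁ 1, A t ≠ 0)
    (hre : ∀ t ∈ Ico r₁ 1, (A' t / A t).re < (2 * t - 2 * lam) / (1 - t ^ 2))
    {r ρ : ℝ} (hr : r₁ ≤ r) (hrρ : r ≤ ρ) (hρ : ρ < 1) :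
    ‖A ρ‖ ≤ ‖A r‖ * ((1 - ρ) / (1 - r)) ^ (lam - 1) := by
  have hderiv : ∀ t ∈ Ico r₁ 1, HasDerivAt (fun s ↦ Real.log ‖A s‖ + logWeight lam s)
      ((A' t / A t).re - (2 * t - 2 * lam) / (1 - t ^ 2)) t := fun t ht ↦
    ((hA t ht).log_norm (hA₀ t ht)).add (hasDerivAt_logWeight lam ⟨by linarith [ht.1], ht.2⟩)
  have hanti : AntitoneOn (fun s ↦ Real.log ‖A s‖ + logWeight lam s) (Ico r₁ 1) := by
    refine antitoneOn_of_hasDerivWithinAt_nonpos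
      (f' := fun t ↦ (A' t / A t).re - (2 * t - 2 * lam) / (1 - t ^ 2)) (convex_Ico r₁ 1)
      (fun t ht ↦ (hderiv t ht).continuousAt.continuousWithinAt) (fun t ht ↦ ?_) (fun t ht ↦ ?_)
    all_goals rw [interior_Ico] at ht
    · exact (hderiv t (Ioo_subset_Ico_self ht)).hasDerivWithinAt
    · linarith [hre t (Ioo_subset_Ico_self ht)]
  exact le_mul_rpow_of_log_add_logWeight_le (norm_pos_iff.mpr (hA₀ r ⟨hr, by linarith⟩))
    (norm_pos_iff.mpr (hA₀ ρ ⟨by linarith, hρ⟩)) hlam (by linarith) hrρ hρ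
    (hanti ⟨hr, by linarith⟩ ⟨by linarith, hρ⟩ hrρ)

theorem stmt_19_general (K : ℝ) (h g : ℂ → ℂ) (lam r₁ : ℝ) (ζ : ℂ)
    (hh : AnalyticOnNhd ℂ h (Metric.ball (0:ℂ) 1))
    (fsp : ∀ z ∈ Metric.ball (0:ℂ) 1, ‖deriv g z‖ < ‖deriv h z‖)
    (hqc : ∀ z ∈ Metric.ball (0:ℂ) 1,
      ‖deriv h z‖ + ‖deriv g z‖
        ≤ K * (‖deriv h z‖ - ‖deriv g z‖))
    (hlam : lam ∈ Set.Ioo (0:ℝ) 1) (hr₁ : 0 ≤ r₁)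
    (hζ : ‖ζ‖ = 1)
    (hre : ∀ η : ℝ, r₁ ≤ η → η < 1 →
      (ζ * deriv (deriv h) ((η:ℂ)*ζ) / deriv h ((η:ℂ)*ζ)).re < (2*η - 2*lam)/(1 - η^2)) :
    ∀ r ρ : ℝ, r₁ ≤ r → r ≤ ρ → ρ < 1 →
      (‖deriv h ((ρ:ℂ)*ζ)‖ + ‖deriv g ((ρ:ℂ)*ζ)‖)
        ≤ (2*K/(1+K)) * (‖deriv h ((r:ℂ)*ζ)‖ + ‖deriv g ((r:ℂ)*ζ)‖) * ((1-ρ)/(1-r)) ^ (lam-1) := by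
  intro r ρ hr hrρ hρ
  have hmem : ∀ t ∈ Ico r₁ 1, (t : ℂ) * ζ ∈ ball (0 : ℂ) 1 := fun t ht ↦ by
    rw [mem_ball_zero_iff, norm_mul, hζ, mul_one, Complex.norm_real, Real.norm_eq_abs,
      abs_lt]
    exact ⟨by linarith [ht.1], ht.2⟩
  have hh' : ‖deriv h (ρ * ζ)‖ ≤ ‖deriv h (r * ζ)‖ * ((1 - ρ) / (1 - r)) ^ (lam - 1) :=
    norm_le_mul_rpow_of_re_div_lt (A := fun t : ℝ ↦ deriv h (t * ζ)) (by linarith [hlam.1])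
      (by linarith)
      (fun t ht ↦ (hh.deriv _ (hmem t ht)).differentiableAt.hasDerivAt.comp_ofReal_mul)
      (fun t ht ↦ norm_pos_iff.mp ((norm_nonneg _).trans_lt (fsp _ (hmem t ht))))
      (fun t ht ↦ hre t ht.1 ht.2) hr hrρ hρ
  have hρmem := hmem ρ ⟨by linarith, hρ⟩
  have hK : 1 ≤ K := one_le_of_add_le_mul_sub (norm_nonneg _) (fsp _ hρmem) (hqc _ hρmem)
  have hP : 0 ≤ ((1 - ρ) / (1 - r)) ^ (lam - 1) :=
    Real.rpow_nonneg (div_nonneg (by linarith) (by linarith)) _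
  calc _ ≤ 2 * K / (1 + K) * ‖deriv h (ρ * ζ)‖ :=
        add_le_two_mul_div_one_add_mul (norm_nonneg _) (fsp _ hρmem) (hqc _ hρmem)
    _ ≤ 2 * K / (1 + K) * (‖deriv h (r * ζ)‖ * ((1 - ρ) / (1 - r)) ^ (lam - 1)) := by gcongr
    _ ≤ _ := by
      rw [mul_assoc]
      gcongr
      linarith [norm_nonneg (deriv g (r * ζ))]

theorem stmt_19 (K : ℝ) (hK : 1 ≤ K) (h g f : ℂ → ℂ) (lam r₁ : ℝ) (ζ : ℂ)
    (hh : AnalyticOnNhd ℂ h (Metric.ball (0:ℂ) 1)) (hg : AnalyticOnNhd ℂ g (Metric.ball (0:ℂ) 1))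
    (hf : ∀ z, f z = h z + (starRingEnd ℂ) (g z))
    (fsp : ∀ z ∈ Metric.ball (0:ℂ) 1, ‖deriv g z‖ < ‖deriv h z‖)
    (hqc : ∀ z ∈ Metric.ball (0:ℂ) 1,
      ‖deriv h z‖ + ‖deriv g z‖
        ≤ K * (‖deriv h z‖ - ‖deriv g z‖))
    (hlam : lam ∈ Set.Ioo (0:ℝ) 1) (hr₁ : 0 ≤ r₁) (hr₁1 : r₁ < 1)
    (hζ : ‖ζ‖ = 1)
    (hre : ∀ η : ℝ, r₁ ≤ η → η < 1 →
      (ζ * deriv (deriv h) ((η:ℂ)*ζ) / deriv h ((η:ℂ)*ζ)).re < (2*η - 2*lam)/(1 - η^2)) :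
    ∀ r ρ : ℝ, r₁ ≤ r → r ≤ ρ → ρ < 1 →
      (‖deriv h ((ρ:ℂ)*ζ)‖ + ‖deriv g ((ρ:ℂ)*ζ)‖)
        ≤ (2*K/(1+K)) * (‖deriv h ((r:ℂ)*ζ)‖ + ‖deriv g ((r:ℂ)*ζ)‖) * ((1-ρ)/(1-r)) ^ (lam-1) :=
  stmt_19_general K h g lam r₁ ζ hh fsp hqc hlam hr₁ hζ hre
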